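/- Let A and B be nonempty finite sets, Act a finite action set and AP a finite set of atomic propositions. Let P : A × Act × A → [0,1] satisfy Σ_{a'∈A} P(a,α,a') ∈ {0,1} for all a ∈ A, α ∈ Act; let u : A × Act × A × B → B be any (deterministic) update function, ι_A : A → [0,1] a distribution with Σ_a ι_A(a) = 1, b₀ ∈ B, and L_A : A → 2^AP. Define the MDP M₁ on state space A × B by Pr₁((a,b), α, (a',b')) = P(a,α,a') if b' = u(a,α,a',b) and 0 otherwise, with labeling L₁(a,b) = L_A(a) and initial distribution ι₁(a,b) = ι_A(a) if b = b₀ and 0 otherwise; and define the MDP M₂ on state space A by Pr₂ = P, L₂ = L_A, ι₂ = ι_A. Then the equivalence relation on (A × B) ⊎ A whose classes are the sets {a} ∪ ({a} × B) for a ∈ A is a probabilistic bisimulation on the disjoint-union MDP, and hence M₁ ≈ M₂. -/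

import Mathlib

/-- Total probability of moving from `s` under action `α` into the set of states `X`. -/
noncomputable def prSet {S Act : Type*} (P : S → Act → S → ℝ) (s : S) (α : Act) (X : Set S) : ℝ :=
  ∑' t : X, P s α t.1

/-- `R` is a probabilistic bisimulation w.r.t. the transition probabilities `P` and the
labeling `L`: it is an equivalence relation, related states carry the same label, and
related states move into every `R`-equivalence class with the same probability. -/
structure IsProbBisim {S Act AP : Type*} (P : S → Act → S → ℝ) (L : S → Set AP)
    (R : S → S → Prop) : Prop where
  equiv : Equivalence R
  label_eq : ∀ s s', R s s' → L s = L s'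
  pr_eq : ∀ s s', R s s' → ∀ (α : Act) (t : S),
    prSet P s α {u | R t u} = prSet P s' α {u | R t u}

/-- Transition probabilities of the disjoint-union MDP (componentwise, no cross transitions). -/
def unionPr {S₁ S₂ Act : Type*} (P₁ : S₁ → Act → S₁ → ℝ) (P₂ : S₂ → Act → S₂ → ℝ) :
    S₁ ⊕ S₂ → Act → S₁ ⊕ S₂ → ℝ
  | Sum.inl s, α, Sum.inl t => P₁ s α t
  | Sum.inr s, α, Sum.inr t => P₂ s α t
  | _, _, _ => 0

/-- Labeling of the disjoint-union MDP. -/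
def unionL {S₁ S₂ AP : Type*} (L₁ : S₁ → Set AP) (L₂ : S₂ → Set AP) : S₁ ⊕ S₂ → Set AP
  | Sum.inl s => L₁ s
  | Sum.inr s => L₂ s

/-- Two MDPs (given by transition probabilities, initial distributions and labelings) are
bisimilar (`M₁ ≈ M₂`) iff some probabilistic bisimulation on the disjoint-union MDP relates
them so that every equivalence class gets the same initial weight from both sides. -/
noncomputable def Bisimilar {S₁ S₂ Act AP : Type*}
    (P₁ : S₁ → Act → S₁ → ℝ) (ι₁ : S₁ → ℝ) (L₁ : S₁ → Set AP)
    (P₂ : S₂ → Act → S₂ → ℝ) (ι₂ : S₂ → ℝ) (L₂ : S₂ → Set AP) : Prop :=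
  ∃ R : S₁ ⊕ S₂ → S₁ ⊕ S₂ → Prop,
    IsProbBisim (unionPr P₁ P₂) (unionL L₁ L₂) R ∧
    ∀ t : S₁ ⊕ S₂,
      (∑' s : {s : S₁ // R (Sum.inl s) t}, ι₁ s.1) =
      (∑' s : {s : S₂ // R (Sum.inr s) t}, ι₂ s.1)

/-!
The `B`-component of `M₁` is written but never read, so from `(a, b)` the probability of
reaching the fiber `{a'} × B` is the single term `P a α a'` (the unique successor in that
fiber is `(a', u a α a' b)`), and the initial weight of `{a} × B` is `ι_A a` (attained at
`(a, b₀)`). Hence both transition probabilities into a class `{a'} ∪ {a'} × B` and initial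
weights factor through the projection to `A`, where they are those of `M₂`.
-/

section Lumping

variable {S C Act AP : Type*}

theorem prSet_eq_tsum_indicator (P : S → Act → S → ℝ) (s : S) (α : Act) (X : Set S) :
    prSet P s α X = ∑' t, X.indicator (P s α) t :=
  tsum_subtype X (P s α)

theorem prSet_singleton (P : S → Act → S → ℝ) (s : S) (α : Act) (t : S) :
    prSet P s α {t} = P s α t :=
  tsum_singleton t (P s α)

theorem isProbBisim_ker_of_factor {P : S → Act → S → ℝ} {L : S → Set AP} (f : S → C)
    (L' : C → Set AP) (Q : C → Act → C → ℝ) (hL : ∀ s, L s = L' (f s))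
    (hP : ∀ s α c, prSet P s α (f ⁻¹' {c}) = Q (f s) α c) :
    IsProbBisim P L (fun v w => f v = f w) where
  equiv := ⟨fun _ => rfl, Eq.symm, Eq.trans⟩
  label_eq s s' h := by rw [hL, hL, h]
  pr_eq s s' h α t := by
    have hclass : {w | f t = f w} = f ⁻¹' {f t} := Set.ext fun _ => eq_comm
    rw [hclass, hP, hP, h]

end Lumping

section DisjointUnion

variable {S₁ S₂ Act : Type*}

theorem prSet_unionPr_inl (P₁ : S₁ → Act → S₁ → ℝ) (P₂ : S₂ → Act → S₂ → ℝ) (s : S₁)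
    (α : Act) (X : Set (S₁ ⊕ S₂)) :
    prSet (unionPr P₁ P₂) (Sum.inl s) α X = prSet P₁ s α (Sum.inl ⁻¹' X) := by
  rw [prSet_eq_tsum_indicator, prSet_eq_tsum_indicator,
    ← Sum.inl_injective.tsum_eq (f := X.indicator (unionPr P₁ P₂ (Sum.inl s) α))]
  · rfl
  · rintro (t | t) ht
    · exact ⟨t, rfl⟩
    · simp [unionPr] at ht

theorem prSet_unionPr_inr (P₁ : S₁ → Act → S₁ → ℝ) (P₂ : S₂ → Act → S₂ → ℝ) (s : S₂)
    (α : Act) (X : Set (S₁ ⊕ S₂)) :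
    prSet (unionPr P₁ P₂) (Sum.inr s) α X = prSet P₂ s α (Sum.inr ⁻¹' X) := by
  rw [prSet_eq_tsum_indicator, prSet_eq_tsum_indicator,
    ← Sum.inr_injective.tsum_eq (f := X.indicator (unionPr P₁ P₂ (Sum.inr s) α))]
  · rfl
  · rintro (t | t) ht
    · simp [unionPr] at ht
    · exact ⟨t, rfl⟩

end DisjointUnion

section WriteOnly

variable {A B Act : Type*} [DecidableEq B]

def writeOnlyPr (P : A → Act → A → ℝ) (u : A → Act → A → B → B) :
    A × B → Act → A × B → ℝ :=
  fun s α t => if t.2 = u s.1 α t.1 s.2 then P s.1 α t.1 else 0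

def writeOnlyInit (ι : A → ℝ) (b₀ : B) : A × B → ℝ :=
  fun s => if s.2 = b₀ then ι s.1 else 0

theorem prSet_writeOnlyPr_fst_preimage (P : A → Act → A → ℝ) (u : A → Act → A → B → B)
    (s : A × B) (α : Act) (c : A) :
    prSet (writeOnlyPr P u) s α (Prod.fst ⁻¹' {c}) = P s.1 α c := by
  rw [prSet, tsum_eq_single ⟨(c, u s.1 α c s.2), rfl⟩]
  · exact if_pos rfl
  rintro ⟨⟨a, b⟩, rfl : a = c⟩ hne
  refine if_neg fun hb => hne ?_
  obtain rfl : b = u s.1 α a s.2 := hb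
  rfl

theorem tsum_writeOnlyInit_fst_eq (ι : A → ℝ) (b₀ : B) (c : A) :
    ∑' s : {s : A × B // s.1 = c}, writeOnlyInit ι b₀ s.1 = ι c := by
  rw [tsum_eq_single ⟨(c, b₀), rfl⟩]
  · exact if_pos rfl
  rintro ⟨⟨a, b⟩, rfl : a = c⟩ hne
  refine if_neg fun hb => hne ?_
  obtain rfl : b = b₀ := hb
  rfl

end WriteOnly

theorem stmt7_general {A B Act AP : Type*} [DecidableEq B]
    (P : A → Act → A → ℝ)
    (u : A → Act → A → B → B)
    (ιA : A → ℝ)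
    (b₀ : B) (LA : A → Set AP) :
    IsProbBisim
      (unionPr
        (fun (s : A × B) (α : Act) (t : A × B) =>
          if t.2 = u s.1 α t.1 s.2 then P s.1 α t.1 else 0)
        P)
      (unionL (fun s : A × B => LA s.1) LA)
      (fun v w => Sum.elim Prod.fst id v = Sum.elim Prod.fst id w) ∧
    Bisimilar
      (fun (s : A × B) (α : Act) (t : A × B) =>
        if t.2 = u s.1 α t.1 s.2 then P s.1 α t.1 else 0)
      (fun s : A × B => if s.2 = b₀ then ιA s.1 else 0)
      (fun s : A × B => LA s.1)
      P ιA LA := by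
  have hbisim : IsProbBisim (unionPr (writeOnlyPr P u) P) (unionL (fun s : A × B => LA s.1) LA)
      (fun v w => Sum.elim Prod.fst id v = Sum.elim Prod.fst id w) := by
    refine isProbBisim_ker_of_factor _ LA P (by rintro (s | a) <;> rfl) ?_
    rintro (s | a) α c
    · rw [prSet_unionPr_inl]
      exact prSet_writeOnlyPr_fst_preimage P u s α c
    · rw [prSet_unionPr_inr]
      exact prSet_singleton P a α c
  refine ⟨hbisim, _, hbisim, fun t => ?_⟩
  exact (tsum_writeOnlyInit_fst_eq ιA b₀ _).trans (tsum_singleton _ ιA).symm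

/-- Eliminating write-only state components: `M₁` runs `P` on the `A`-component and updates
the `B`-component deterministically via `u` (never reading it, except through `u` itself);
`M₂` is the projection to `A`. The equivalence relation identifying states with the same
`A`-component (classes `{a} ∪ {a} × B`) is a probabilistic bisimulation on the disjoint-union
MDP, hence `M₁ ≈ M₂`. -/
theorem stmt7 {A B Act AP : Type*} [Fintype A] [Fintype B] [Nonempty A] [Nonempty B]
    [Fintype Act] [Fintype AP] [DecidableEq B]
    (P : A → Act → A → ℝ)
    (hP0 : ∀ a α a', 0 ≤ P a α a') (hP1 : ∀ a α a', P a α a' ≤ 1)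
    (hPsum : ∀ a α, (∑ a', P a α a') = 0 ∨ (∑ a', P a α a') = 1)
    (u : A → Act → A → B → B)
    (ιA : A → ℝ) (hι0 : ∀ a, 0 ≤ ιA a) (hιsum : (∑ a, ιA a) = 1)
    (b₀ : B) (LA : A → Set AP) :
    IsProbBisim
      (unionPr
        (fun (s : A × B) (α : Act) (t : A × B) =>
          if t.2 = u s.1 α t.1 s.2 then P s.1 α t.1 else 0)
        P)
      (unionL (fun s : A × B => LA s.1) LA)
      (fun v w => Sum.elim Prod.fst id v = Sum.elim Prod.fst id w) ∧
    Bisimilar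
      (fun (s : A × B) (α : Act) (t : A × B) =>
        if t.2 = u s.1 α t.1 s.2 then P s.1 α t.1 else 0)
      (fun s : A × B => if s.2 = b₀ then ιA s.1 else 0)
      (fun s : A × B => LA s.1)
      P ιA LA :=
  stmt7_general P u ιA b₀ LA
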